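/- Let p ≥ 1, let E₁,…,Eₙ and G₁,…,Gₙ be normed spaces over 𝕂, and let u_l : G_l → E_l be bounded linear operators, l = 1,…,n. Then for every z ∈ G₁⊗⋯⊗Gₙ, σ_p((u₁⊗⋯⊗uₙ)(z)) ≤ ‖u₁‖⋯‖uₙ‖ · σ_p(z), where σ_p on the left is taken on E₁⊗⋯⊗Eₙ and on the right on G₁⊗⋯⊗Gₙ. (σ_p has the metric mapping property.) -/

import Mathlib

open scoped TensorProduct
open PiTensorProduct

/-- The `ℓ_q` norm of a finite family of scalars, where `q` is the conjugate exponent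
of `p` (`1/p + 1/q = 1`, with `q = ∞`, i.e. the sup norm, when `p = 1`). -/
noncomputable def lqNorm {𝕜 : Type*} [RCLike 𝕜] (p : ℝ) {m : ℕ} (lam : Fin m → 𝕜) : ℝ :=
  if p = 1 then ⨆ j, ‖lam j‖ else (∑ j, ‖lam j‖ ^ (p / (p - 1))) ^ ((p - 1) / p)

/-- `sup_{‖φ_l‖ ≤ 1} Σ_j |φ₁(x_{1,j}) ⋯ φₙ(x_{n,j})|^p`. -/
noncomputable def supTerm (𝕜 : Type*) [RCLike 𝕜] {n : ℕ} {E : Fin n → Type*}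
    [∀ i, NormedAddCommGroup (E i)] [∀ i, NormedSpace 𝕜 (E i)]
    (p : ℝ) {m : ℕ} (x : Fin m → Π i, E i) : ℝ :=
  ⨆ φ : {φ : Π i, E i →L[𝕜] 𝕜 // ∀ i, ‖φ i‖ ≤ 1},
    ∑ j, (∏ i, ‖φ.1 i (x j i)‖) ^ p

/-- The tensor norm `σ_p` on `E₁ ⊗ ⋯ ⊗ Eₙ`. -/
noncomputable def sigmaNorm {𝕜 : Type*} [RCLike 𝕜] {n : ℕ} {E : Fin n → Type*}
    [∀ i, NormedAddCommGroup (E i)] [∀ i, NormedSpace 𝕜 (E i)]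
    (p : ℝ) (u : ⨂[𝕜] i, E i) : ℝ :=
  sInf { r : ℝ | ∃ (m : ℕ) (lam : Fin m → 𝕜) (x : Fin m → Π i, E i),
    u = (∑ j, lam j • ⨂ₜ[𝕜] i, x j i) ∧
    r = lqNorm p lam * (supTerm 𝕜 p x) ^ (1/p) }

/-!
A representation `z = ∑ⱼ λⱼ • ⨂ᵢ xⱼᵢ` is pushed forward to the representation
`∑ⱼ λⱼ • ⨂ᵢ uᵢ xⱼᵢ` of the image, with the same coefficients. A functional `φᵢ` of norm at most
one on `Eᵢ` pulls back to `φᵢ ∘ uᵢ = ‖uᵢ‖ • ψᵢ` with `‖ψᵢ‖ ≤ 1`, so the weak `ℓ_p` term of the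
image is at most `(∏ᵢ ‖uᵢ‖)ᵖ` times that of `z`. Taking the infimum over representations gives
the bound.
-/

lemma ContinuousLinearMap.exists_norm_le_one_norm_comp_eq {𝕜 F G : Type*} [RCLike 𝕜]
    [NormedAddCommGroup F] [NormedSpace 𝕜 F] [NormedAddCommGroup G] [NormedSpace 𝕜 G]
    (φ : F →L[𝕜] 𝕜) (hφ : ‖φ‖ ≤ 1) (u : G →L[𝕜] F) :
    ∃ ψ : G →L[𝕜] 𝕜, ‖ψ‖ ≤ 1 ∧ ∀ x, ‖φ (u x)‖ = ‖u‖ * ‖ψ x‖ := by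
  -- since `0⁻¹ = 0`, this choice needs no case split on `u = 0` for the norm bound
  refine ⟨(‖u‖⁻¹ : 𝕜) • φ.comp u, ?_, fun x => ?_⟩
  · calc ‖(‖u‖⁻¹ : 𝕜) • φ.comp u‖ ≤ ‖u‖⁻¹ * (‖φ‖ * ‖u‖) := by
          refine (opNorm_smul_le _ _).trans ?_
          rw [norm_inv, RCLike.norm_ofReal, abs_norm]
          gcongr
          exact φ.opNorm_comp_le u
      _ ≤ ‖u‖⁻¹ * ‖u‖ := by gcongr; exact mul_le_of_le_one_left (norm_nonneg _) hφ
      _ ≤ 1 := inv_mul_le_one_of_le₀ le_rfl (norm_nonneg _)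
  · rcases eq_or_ne ‖u‖ 0 with hu | hu
    · simp [(opNorm_zero_iff u).1 hu]
    · simp [hu]

lemma Real.sInf_le_mul_sInf {S T : Set ℝ} {C : ℝ} (hC : 0 ≤ C) (hT : BddBelow T)
    (hS : S.Nonempty) (h : ∀ r ∈ S, ∃ r' ∈ T, r' ≤ C * r) : sInf T ≤ C * sInf S := by
  rw [← smul_eq_mul, ← Real.sInf_smul_of_nonneg hC]
  refine le_csInf hS.smul_set ?_
  rintro _ ⟨r, hr, rfl⟩
  obtain ⟨r', hr', hle⟩ := h r hr
  exact (csInf_le hT hr').trans hle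

section SigmaNorm

variable {𝕜 : Type*} [RCLike 𝕜] {n : ℕ} {E G : Fin n → Type*}
  [∀ i, NormedAddCommGroup (E i)] [∀ i, NormedSpace 𝕜 (E i)]
  [∀ i, NormedAddCommGroup (G i)] [∀ i, NormedSpace 𝕜 (G i)]

lemma lqNorm_nonneg (p : ℝ) {m : ℕ} (lam : Fin m → 𝕜) : 0 ≤ lqNorm p lam := by
  unfold lqNorm
  split_ifs
  · exact Real.iSup_nonneg fun j => norm_nonneg _
  · positivity

lemma supTerm_nonneg (p : ℝ) {m : ℕ} (x : Fin m → Π i, E i) : 0 ≤ supTerm 𝕜 p x :=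
  Real.iSup_nonneg fun _ => by positivity

lemma le_supTerm {p : ℝ} (hp : 0 ≤ p) {m : ℕ} (x : Fin m → Π i, E i)
    (φ : Π i, E i →L[𝕜] 𝕜) (hφ : ∀ i, ‖φ i‖ ≤ 1) :
    ∑ j, (∏ i, ‖φ i (x j i)‖) ^ p ≤ supTerm 𝕜 p x := by
  refine le_ciSup (f := fun φ : {φ : Π i, E i →L[𝕜] 𝕜 // ∀ i, ‖φ i‖ ≤ 1} =>
    ∑ j, (∏ i, ‖φ.1 i (x j i)‖) ^ p) ⟨∑ j, (∏ i, ‖x j i‖) ^ p, ?_⟩ ⟨φ, hφ⟩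
  rintro _ ⟨⟨φ, hφ⟩, rfl⟩
  dsimp only
  gcongr with j _ i
  exact (φ i).le_of_opNorm_le (hφ i) _ |>.trans_eq (one_mul _)

lemma supTerm_map_le {p : ℝ} (hp : 0 ≤ p) (u : Π i, G i →L[𝕜] E i) {m : ℕ}
    (x : Fin m → Π i, G i) :
    supTerm 𝕜 p (fun j i => u i (x j i)) ≤ (∏ i, ‖u i‖) ^ p * supTerm 𝕜 p x := by
  have : Nonempty {φ : Π i, E i →L[𝕜] 𝕜 // ∀ i, ‖φ i‖ ≤ 1} := ⟨⟨0, fun _ => by simp⟩⟩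
  refine ciSup_le fun ⟨φ, hφ⟩ => ?_
  choose ψ hψ hφψ using fun i => (φ i).exists_norm_le_one_norm_comp_eq (hφ i) (u i)
  calc ∑ j, (∏ i, ‖φ i (u i (x j i))‖) ^ p
      = (∏ i, ‖u i‖) ^ p * ∑ j, (∏ i, ‖ψ i (x j i)‖) ^ p := by
        simp_rw [hφψ, Finset.prod_mul_distrib, Finset.mul_sum]
        refine Finset.sum_congr rfl fun j _ => Real.mul_rpow ?_ ?_ <;> positivity
    _ ≤ (∏ i, ‖u i‖) ^ p * supTerm 𝕜 p x := by gcongr; exact le_supTerm hp x ψ hψ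

lemma supTerm_map_rpow_le {p : ℝ} (hp : 0 < p) (u : Π i, G i →L[𝕜] E i) {m : ℕ}
    (x : Fin m → Π i, G i) :
    supTerm 𝕜 p (fun j i => u i (x j i)) ^ (1 / p) ≤ (∏ i, ‖u i‖) * supTerm 𝕜 p x ^ (1 / p) := by
  have hC : 0 ≤ ∏ i, ‖u i‖ := by positivity
  calc supTerm 𝕜 p (fun j i => u i (x j i)) ^ (1 / p)
      ≤ ((∏ i, ‖u i‖) ^ p * supTerm 𝕜 p x) ^ (1 / p) := by
        gcongr
        · exact supTerm_nonneg p _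
        · exact supTerm_map_le hp.le u x
    _ = (∏ i, ‖u i‖) * supTerm 𝕜 p x ^ (1 / p) := by
        rw [Real.mul_rpow (by positivity) (supTerm_nonneg p x), ← Real.rpow_mul hC,
          mul_one_div_cancel hp.ne', Real.rpow_one]

lemma PiTensorProduct.exists_eq_sum_smul_tprod (z : ⨂[𝕜] i, E i) :
    ∃ (m : ℕ) (lam : Fin m → 𝕜) (x : Fin m → Π i, E i), z = ∑ j, lam j • ⨂ₜ[𝕜] i, x j i := by
  have hz : z ∈ Submodule.span 𝕜 (Set.range (tprod 𝕜)) := by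
    rw [span_tprod_eq_top]; exact Submodule.mem_top
  obtain ⟨m, lam, t, hz⟩ := Submodule.mem_span_set'.1 hz
  choose x hx using fun j => (t j).2
  exact ⟨m, lam, x, by simp_rw [hx]; exact hz.symm⟩

variable (𝕜) in
/-- `sigmaNorm p w` is definitionally `sInf (sigmaNormCosts 𝕜 p w)`. -/
def sigmaNormCosts (p : ℝ) (w : ⨂[𝕜] i, E i) : Set ℝ :=
  { r : ℝ | ∃ (m : ℕ) (lam : Fin m → 𝕜) (x : Fin m → Π i, E i),
    w = (∑ j, lam j • ⨂ₜ[𝕜] i, x j i) ∧ r = lqNorm p lam * (supTerm 𝕜 p x) ^ (1/p) }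

lemma sigmaNormCosts_nonempty (p : ℝ) (w : ⨂[𝕜] i, E i) : (sigmaNormCosts 𝕜 p w).Nonempty :=
  have ⟨m, lam, x, hw⟩ := exists_eq_sum_smul_tprod w
  ⟨_, m, lam, x, hw, rfl⟩

lemma sigmaNormCosts_bddBelow (p : ℝ) (w : ⨂[𝕜] i, E i) : BddBelow (sigmaNormCosts 𝕜 p w) := by
  refine ⟨0, ?_⟩
  rintro _ ⟨m, lam, x, -, rfl⟩
  exact mul_nonneg (lqNorm_nonneg p lam) (Real.rpow_nonneg (supTerm_nonneg p x) _)

end SigmaNorm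

theorem sigmaNorm_metric_mapping_general {𝕜 : Type*} [RCLike 𝕜] {n : ℕ}
    (E : Fin n → Type*) [∀ i, NormedAddCommGroup (E i)] [∀ i, NormedSpace 𝕜 (E i)]
    (G : Fin n → Type*) [∀ i, NormedAddCommGroup (G i)] [∀ i, NormedSpace 𝕜 (G i)]
    (p : ℝ) (hp : 1 ≤ p) (u : Π i, G i →L[𝕜] E i) (z : ⨂[𝕜] i, G i) :
    sigmaNorm p (PiTensorProduct.map (fun i => (u i).toLinearMap) z)
      ≤ (∏ i, ‖u i‖) * sigmaNorm p z := by
  refine Real.sInf_le_mul_sInf (by positivity) (sigmaNormCosts_bddBelow p _)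
    (sigmaNormCosts_nonempty p z) ?_
  rintro _ ⟨m, lam, x, rfl, rfl⟩
  refine ⟨_, ⟨m, lam, fun j i => u i (x j i), by simp [map_tprod], rfl⟩, ?_⟩
  rw [mul_left_comm]
  gcongr
  · exact lqNorm_nonneg p lam
  · exact supTerm_map_rpow_le (zero_lt_one.trans_le hp) u x

/-- `σ_p` has the metric mapping property: for bounded linear operators `u_l : G_l → E_l`,
`σ_p((u₁ ⊗ ⋯ ⊗ uₙ)(z)) ≤ ‖u₁‖ ⋯ ‖uₙ‖ · σ_p(z)`. -/
theorem sigmaNorm_metric_mapping {𝕜 : Type*} [RCLike 𝕜] {n : ℕ} (hn : 1 ≤ n)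
    (E : Fin n → Type*) [∀ i, NormedAddCommGroup (E i)] [∀ i, NormedSpace 𝕜 (E i)]
    (G : Fin n → Type*) [∀ i, NormedAddCommGroup (G i)] [∀ i, NormedSpace 𝕜 (G i)]
    (p : ℝ) (hp : 1 ≤ p) (u : Π i, G i →L[𝕜] E i) (z : ⨂[𝕜] i, G i) :
    sigmaNorm p (PiTensorProduct.map (fun i => (u i).toLinearMap) z)
      ≤ (∏ i, ‖u i‖) * sigmaNorm p z :=
  sigmaNorm_metric_mapping_general E G p hp u z
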